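/- arXiv:2205.04199 — 5 statements merged into one kernel-verified Lean document; each statement's English description precedes it below -/
import Mathlib

section
/- Let R be an ordered divisible abelian group (e.g. an ordered field) and let Y ⊆ R be a finite union of bounded open intervals. Then there exists α ∈ R such that the set (Y + α) ∩ Y is a single nonempty open interval. -/
open Set

/-- Let `R` be an ordered divisible abelian group (e.g. an ordered field) and
`Y ⊆ R` a finite union of pairwise disjoint bounded open intervals, ordered as
`a 0 < b 0 < a 1 < ⋯`. Then some translate `(Y + α) ∩ Y` is a single nonempty open interval. -/
theorem stmt_0 {R : Type*} [Field R] [LinearOrder R] [IsStrictOrderedRing R]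
    (n : ℕ) (hn : 0 < n) (a b : Fin n → R)
    (hab : ∀ i, a i < b i)
    (hsep : ∀ i j : Fin n, i < j → b i < a j)
    (Y : Set R) (hY : Y = ⋃ i, Ioo (a i) (b i)) :
    ∃ α c d : R, c < d ∧ ((fun y => y + α) '' Y) ∩ Y = Ioo c d := by
  subst hY
  set i0 : Fin n := ⟨0, hn⟩ with hi0
  set L : Fin n := ⟨n - 1, Nat.sub_lt hn one_pos⟩ with hL
  set ε : R := min (b i0 - a i0) (b L - a L) / 2 with hεdef
  have hε0 : (0 : R) < ε := by
    have h1 := hab i0; have h2 := hab L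
    have : (0 : R) < min (b i0 - a i0) (b L - a L) := lt_min (by linarith) (by linarith)
    rw [hεdef]; linarith
  have hε1 : 2 * ε ≤ b i0 - a i0 := by
    have := min_le_left (b i0 - a i0) (b L - a L); rw [hεdef]; linarith
  have hε2 : 2 * ε ≤ b L - a L := by
    have := min_le_right (b i0 - a i0) (b L - a L); rw [hεdef]; linarith
  have hble : ∀ j, b j ≤ b L := by
    intro j
    have hjL : j ≤ L := Fin.le_def.mpr (Nat.le_pred_of_lt j.isLt)
    rcases eq_or_lt_of_le hjL with h | h
    · exact le_of_eq (by rw [h])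
    · have := hsep j L h; linarith [hab L]
  refine ⟨b L - a i0 - ε, b L - ε, b L, by linarith, ?_⟩
  set α : R := b L - a i0 - ε with hα
  ext x
  simp only [mem_inter_iff, mem_image, mem_iUnion, mem_Ioo]
  constructor
  · rintro ⟨⟨y, ⟨i, hy1, hy2⟩, rfl⟩, j, hj1, hj2⟩
    have hbj := hble j
    constructor
    · by_cases hi : i = i0
      · subst hi; rw [hα]; linarith
      · exfalso
        have h0i : i0 < i := by
          refine lt_of_le_of_ne (Fin.le_def.mpr (Nat.zero_le _)) (Ne.symm hi)
        have := hsep i0 i h0i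
        rw [hα] at hj2
        linarith
    · linarith
  · rintro ⟨hc, hd⟩
    refine ⟨⟨x - α, ⟨i0, ?_, ?_⟩, by ring⟩, L, ?_, hd⟩
    · rw [hα]; linarith
    · rw [hα]; linarith
    · linarith
end

section
/- Let R be a densely ordered abelian group and let X ⊆ R be a subset that is a finite union of open intervals (each bounded or a ray). Then X is bounded if and only if there exists a ∈ R such that (a + X) ∩ X = ∅. -/
open Set

/-- Let `R` be a densely ordered abelian group and `X ⊆ R` a finite union
of open intervals (bounded intervals or rays). Then `X` is bounded iff some translate
`(a + X)` is disjoint from `X`. -/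
theorem stmt_3 {R : Type*} [AddCommGroup R] [LinearOrder R] [IsOrderedAddMonoid R] [DenselyOrdered R]
    (n : ℕ) (I : Fin n → Set R)
    (hI : ∀ i, (∃ a b : R, I i = Ioo a b) ∨ (∃ b : R, I i = Iio b) ∨ (∃ a : R, I i = Ioi a))
    (X : Set R) (hX : X = ⋃ i, I i) :
    (∃ M : R, X ⊆ Icc (-M) M) ↔ ∃ a : R, ((fun x => a + x) '' X) ∩ X = ∅ := by
  constructor
  · rintro ⟨M, hM⟩
    by_cases hx : X = ∅
    · exact ⟨0, by simp [hx]⟩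
    · obtain ⟨x0, hx0⟩ := nonempty_iff_ne_empty.mpr hx
      -- extract a positive element
      have hp : ∃ p : R, 0 < p := by
        rw [hX] at hx0
        obtain ⟨i, hi⟩ := mem_iUnion.mp hx0
        rcases hI i with ⟨a, b, h⟩ | ⟨b, h⟩ | ⟨a, h⟩
        · rw [h] at hi; exact ⟨x0 - a, by simp [sub_pos, hi.1]⟩
        · rw [h] at hi; exact ⟨b - x0, by simp [sub_pos]; exact hi⟩
        · rw [h] at hi; exact ⟨x0 - a, by simp [sub_pos]; exact hi⟩
      obtain ⟨p, hp⟩ := hp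
      refine ⟨M + M + p, ?_⟩
      ext y
      simp only [mem_inter_iff, mem_image, mem_empty_iff_false, iff_false, not_and]
      rintro ⟨x, hxX, rfl⟩ hyX
      have h1 := hM hxX
      have h2 := hM hyX
      simp only [mem_Icc] at h1 h2
      have e1 : M + p ≤ M + M + p + x := by
        calc M + p = M + M + p + -M := by abel
          _ ≤ M + M + p + x := add_le_add_right h1.1 _
      have e2 : M + p ≤ M := e1.trans h2.2
      have hp0 : p ≤ 0 := by simpa using add_le_add_left e2 (-M)
      exact absurd hp0 (not_le.mpr hp)
  · rintro ⟨a, ha⟩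
    by_cases hp : ∃ p : R, 0 < p
    · obtain ⟨p, hp⟩ := hp
      -- every interval is bounded above and below
      have key : ∀ i, BddAbove (I i) ∧ BddBelow (I i) := by
        intro i
        rcases hI i with ⟨c, d, h⟩ | ⟨b, h⟩ | ⟨c, h⟩
        · exact h ▸ ⟨bddAbove_Ioo, bddBelow_Ioo⟩
        · exfalso
          set x := min b (b - a) - p with hxdef
          have hxb : x < b := lt_of_lt_of_le (sub_lt_self _ hp) (min_le_left _ _)
          have haxb : a + x < b := by
            have h2 : x < b - a := lt_of_lt_of_le (sub_lt_self _ hp) (min_le_right _ _)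
            have h3 := add_lt_add_right h2 a
            simpa using h3
          have hxX : x ∈ X := by rw [hX]; exact mem_iUnion.mpr ⟨i, by rw [h]; exact hxb⟩
          have hyX : a + x ∈ X := by rw [hX]; exact mem_iUnion.mpr ⟨i, by rw [h]; exact haxb⟩
          have : a + x ∈ ((fun x => a + x) '' X) ∩ X := ⟨⟨x, hxX, rfl⟩, hyX⟩
          rw [ha] at this; exact this
        · exfalso
          set x := max c (c - a) + p with hxdef
          have hxb : c < x := lt_of_le_of_lt (le_max_left _ _) (lt_add_of_pos_right _ hp)
          have haxb : c < a + x := by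
            have h2 : c - a < x := lt_of_le_of_lt (le_max_right _ _) (lt_add_of_pos_right _ hp)
            have h3 := add_lt_add_right h2 a
            simpa using h3
          have hxX : x ∈ X := by rw [hX]; exact mem_iUnion.mpr ⟨i, by rw [h]; exact hxb⟩
          have hyX : a + x ∈ X := by rw [hX]; exact mem_iUnion.mpr ⟨i, by rw [h]; exact haxb⟩
          have : a + x ∈ ((fun x => a + x) '' X) ∩ X := ⟨⟨x, hxX, rfl⟩, hyX⟩
          rw [ha] at this; exact this
      have hXU : X = ⋃ i ∈ (Finset.univ : Finset (Fin n)), I i := by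
        rw [hX]; simp
      have hub : BddAbove X := by
        rw [hXU]
        exact (Set.Finite.bddAbove_biUnion (Finset.finite_toSet _)).mpr
          (fun i _ => (key i).1)
      have hlb : BddBelow X := by
        rw [hXU]
        exact (Set.Finite.bddBelow_biUnion (Finset.finite_toSet _)).mpr
          (fun i _ => (key i).2)
      obtain ⟨u, hu⟩ := hub
      obtain ⟨l, hl⟩ := hlb
      refine ⟨max u (-l), fun x hx => ?_⟩
      have h1 := hu hx
      have h2 := hl hx
      constructor
      · have : -max u (-l) ≤ -(-l) := neg_le_neg (le_max_right _ _)
        simpa using this.trans (by simpa using h2)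
      · exact h1.trans (le_max_left _ _)
    · push_neg at hp
      refine ⟨0, fun x hx => ?_⟩
      have h1 : x ≤ 0 := hp x
      have h2 : 0 ≤ x := by simpa using hp (-x)
      exact ⟨by simpa using h2, h1⟩
end

section
/- Let R be an ordered abelian group, λ : R → R an additive group homomorphism, and b ∈ R. Let X ⊆ R² be a set such that X Δ Γ(λ + b) is bounded, where Γ(λ + b) = {(x, λ(x) + b) : x ∈ R}, and assume λ ≠ 0 or more generally that {(x, λ(x)) : x ∈ R} is unbounded. Then Stab_bd(X) = Γ(λ) = {(x, λ(x)) : x ∈ R}. -/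
open Set

/-- Boundedness in `R × R`: contained in `[-M,M]²` for some `M > 0`. -/
def IsBddSq {R : Type*} [AddCommGroup R] [LinearOrder R] [IsOrderedAddMonoid R] (S : Set (R × R)) : Prop :=
  ∃ M : R, 0 < M ∧ ∀ p ∈ S, |p.1| ≤ M ∧ |p.2| ≤ M

/-- The bounded-stabilizer of `X ⊆ R²`. -/
def stabBd {R : Type*} [AddCommGroup R] [LinearOrder R] [IsOrderedAddMonoid R] (X : Set (R × R)) : Set (R × R) :=
  {a | IsBddSq ((((a + ·) '' X) \ X) ∪ (X \ ((a + ·) '' X)))}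

/-- symmetric difference of sets -/
def sd {α : Type*} (S T : Set α) : Set α := (S \ T) ∪ (T \ S)

lemma sd_comm {α : Type*} (S T : Set α) : sd S T = sd T S := by
  simp [sd, Set.union_comm]

lemma sd_triangle {α : Type*} (A B C : Set α) : sd A C ⊆ sd A B ∪ sd B C := by
  intro p hp
  rcases hp with ⟨hA, hC⟩ | ⟨hC, hA⟩
  · by_cases hB : p ∈ B
    · exact Or.inr (Or.inl ⟨hB, hC⟩)
    · exact Or.inl (Or.inl ⟨hA, hB⟩)
  · by_cases hB : p ∈ B
    · exact Or.inl (Or.inr ⟨hB, hA⟩)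
    · exact Or.inr (Or.inr ⟨hC, hB⟩)

lemma bdd_subset {R : Type*} [AddCommGroup R] [LinearOrder R] [IsOrderedAddMonoid R] {S T : Set (R × R)}
    (h : S ⊆ T) (hT : IsBddSq T) : IsBddSq S := by
  obtain ⟨M, hM, hb⟩ := hT
  exact ⟨M, hM, fun p hp => hb p (h hp)⟩

lemma bdd_union {R : Type*} [AddCommGroup R] [LinearOrder R] [IsOrderedAddMonoid R] {S T : Set (R × R)}
    (hS : IsBddSq S) (hT : IsBddSq T) : IsBddSq (S ∪ T) := by
  obtain ⟨M, hM, hb⟩ := hS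
  obtain ⟨N, hN, hc⟩ := hT
  refine ⟨max M N, lt_max_of_lt_left hM, fun p hp => ?_⟩
  rcases hp with hp | hp
  · exact ⟨(hb p hp).1.trans (le_max_left _ _), (hb p hp).2.trans (le_max_left _ _)⟩
  · exact ⟨(hc p hp).1.trans (le_max_right _ _), (hc p hp).2.trans (le_max_right _ _)⟩

lemma bdd_image {R : Type*} [AddCommGroup R] [LinearOrder R] [IsOrderedAddMonoid R] {S : Set (R × R)} (a : R × R)
    (hS : IsBddSq S) : IsBddSq ((a + ·) '' S) := by
  obtain ⟨M, hM, hb⟩ := hS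
  refine ⟨M + |a.1| + |a.2|, by positivity, ?_⟩
  rintro p ⟨q, hq, rfl⟩
  obtain ⟨h1, h2⟩ := hb q hq
  constructor
  · calc |(a + q).1| = |a.1 + q.1| := rfl
      _ ≤ |a.1| + |q.1| := abs_add_le _ _
      _ ≤ M + |a.1| := by calc |a.1| + |q.1| ≤ |a.1| + M := add_le_add_right h1 _
            _ = M + |a.1| := add_comm _ _
      _ ≤ M + |a.1| + |a.2| := le_add_of_nonneg_right (abs_nonneg _)
  · calc |(a + q).2| = |a.2 + q.2| := rfl
      _ ≤ |a.2| + |q.2| := abs_add_le _ _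
      _ ≤ M + |a.2| := by calc |a.2| + |q.2| ≤ |a.2| + M := add_le_add_right h2 _
            _ = M + |a.2| := add_comm _ _
      _ ≤ M + |a.2| + |a.1| := le_add_of_nonneg_right (abs_nonneg _)
      _ = M + |a.1| + |a.2| := by abel

lemma image_sd {α : Type*} {f : α → α} (hf : Function.Injective f) (S T : Set α) :
    f '' sd S T = sd (f '' S) (f '' T) := by
  simp [sd, Set.image_union, Set.image_diff hf]

lemma graph_translate {R : Type*} [AddCommGroup R] [LinearOrder R] [IsOrderedAddMonoid R]
    (lam : R →+ R) (b : R) (a : R × R) (ha : a.2 = lam a.1) :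
    (a + ·) '' {p : R × R | p.2 = lam p.1 + b} = {p : R × R | p.2 = lam p.1 + b} := by
  ext p
  constructor
  · rintro ⟨q, hq, rfl⟩
    simp only [Set.mem_setOf_eq] at hq ⊢
    show a.2 + q.2 = lam (a.1 + q.1) + b
    rw [ha, hq, map_add]; abel
  · intro hp
    refine ⟨p - a, ?_, by simp⟩
    simp only [Set.mem_setOf_eq] at hp ⊢
    show p.2 - a.2 = lam (p.1 - a.1) + b
    rw [ha, hp, map_sub]; abel

/-- If `X ⊆ R²` differs from the graph of the affine map `x ↦ λ(x) + b`
by a bounded set, and the graph of `λ` is unbounded, then `Stab_bd(X)` is exactly the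
graph of the linear part `λ`. -/
theorem stmt_5 {R : Type*} [AddCommGroup R] [LinearOrder R] [IsOrderedAddMonoid R]
    (lam : R →+ R) (b : R) (X : Set (R × R))
    (hXΓ : IsBddSq ((X \ {p : R × R | p.2 = lam p.1 + b}) ∪
      ({p : R × R | p.2 = lam p.1 + b} \ X)))
    (hΓunb : ¬ IsBddSq {p : R × R | p.2 = lam p.1}) :
    stabBd X = {p : R × R | p.2 = lam p.1} := by
  set Γb : Set (R × R) := {p : R × R | p.2 = lam p.1 + b} with hΓb
  have hXG : IsBddSq (sd X Γb) := hXΓ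
  have hinj : ∀ a : R × R, Function.Injective (a + ·) := fun a x y h => by
    simpa using add_left_cancel h
  ext a
  simp only [Set.mem_setOf_eq]
  constructor
  · -- a ∈ stabBd X → a.2 = lam a.1
    intro haX
    by_contra hc
    have haX' : IsBddSq (sd ((a + ·) '' X) X) := haX
    -- Γb ⊆ sd ((a+·)''Γb) Γb
    have hsub : Γb ⊆ sd ((a + ·) '' Γb) Γb := by
      intro p hp
      refine Or.inr ⟨hp, ?_⟩
      rintro ⟨q, hq, rfl⟩
      simp only [hΓb, Set.mem_setOf_eq] at hp hq
      have h1 : a.2 + q.2 = lam (a.1 + q.1) + b := hp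
      rw [hq, map_add, add_assoc] at h1
      exact hc (add_right_cancel h1)
    have h1 : IsBddSq (sd ((a + ·) '' Γb) ((a + ·) '' X)) := by
      rw [← image_sd (hinj a)]
      refine bdd_image a ?_
      rw [sd_comm]; exact hXG
    have h2 : sd ((a + ·) '' Γb) Γb ⊆
        (sd ((a + ·) '' Γb) ((a + ·) '' X) ∪ sd ((a + ·) '' X) X) ∪ sd X Γb := by
      intro p hp
      rcases sd_triangle ((a + ·) '' Γb) ((a + ·) '' X) Γb hp with h | h
      · exact Or.inl (Or.inl h)
      · rcases sd_triangle ((a + ·) '' X) X Γb h with h' | h'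
        · exact Or.inl (Or.inr h')
        · exact Or.inr h'
    have hΓbBdd : IsBddSq Γb :=
      bdd_subset (hsub.trans h2) (bdd_union (bdd_union h1 haX') hXG)
    apply hΓunb
    obtain ⟨M, hM, hb⟩ := hΓbBdd
    refine ⟨M + |b|, by positivity, fun p hp => ?_⟩
    have hpb : (p.1, p.2 + b) ∈ Γb := by
      simp only [hΓb, Set.mem_setOf_eq] at hp ⊢
      simp [hp]
    obtain ⟨h1', h2'⟩ := hb _ hpb
    simp only at h1' h2'
    constructor
    · exact h1'.trans (le_add_of_nonneg_right (abs_nonneg _))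
    · calc |p.2| = |(p.2 + b) + (-b)| := by rw [add_neg_cancel_right]
        _ ≤ |p.2 + b| + |(-b)| := abs_add_le _ _
        _ = |p.2 + b| + |b| := by rw [abs_neg]
        _ ≤ M + |b| := add_le_add_left h2' _
  · -- a.2 = lam a.1 → a ∈ stabBd X
    intro ha
    show IsBddSq (sd ((a + ·) '' X) X)
    have key : (a + ·) '' Γb = Γb := graph_translate lam b a ha
    have h2 : sd ((a + ·) '' X) X ⊆
        (sd ((a + ·) '' X) ((a + ·) '' Γb) ∪ sd ((a + ·) '' Γb) Γb) ∪ sd Γb X := by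
      intro p hp
      rcases sd_triangle ((a + ·) '' X) ((a + ·) '' Γb) X hp with h | h
      · exact Or.inl (Or.inl h)
      · rcases sd_triangle ((a + ·) '' Γb) Γb X h with h' | h'
        · exact Or.inl (Or.inr h')
        · exact Or.inr h'
    refine bdd_subset h2 (bdd_union (bdd_union ?_ ?_) ?_)
    · rw [← image_sd (hinj a)]
      exact bdd_image a hXG
    · rw [key]
      obtain ⟨M, hM, _⟩ := hXG
      exact ⟨M, hM, fun p hp => by simp [sd] at hp⟩
    · rw [sd_comm]; exact hXG
end

section
/- Let R be a real closed field and let 𝔅* be any collection of bounded subsets of the spaces Rⁿ (n ∈ ℕ). Then the full order < on R is not definable (with parameters) in the structure ⟨R; +, (λ_α)_{α∈R}, 𝔅*⟩, where λ_α denotes scalar multiplication by α. -/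
open Set FirstOrder

/-- `R` is a real closed (ordered) field. -/
def IsRealClosed' (R : Type*) [Field R] [LinearOrder R] [IsStrictOrderedRing R] : Prop :=
  (∀ x : R, 0 ≤ x → ∃ y, y ^ 2 = x) ∧
    ∀ p : Polynomial R, Odd p.natDegree → ∃ x, p.eval x = 0

/-- Function symbols for the language `⟨+, (λ_α)_{α ∈ R}⟩`: a unary symbol for each
scalar `α : R` and a binary symbol for addition. -/
def sbFun (R : Type u) : ℕ → Type u
  | 1 => R
  | 2 => PUnit
  | _ => PEmpty

/-- The language `⟨+, (λ_α)_{α ∈ R}, 𝔅*⟩`, with an `n`-ary relation symbol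
for each set in `𝔅 n`. -/
def sbLang (R : Type*) (𝔅 : ∀ n : ℕ, Set (Set (Fin n → R))) : Language :=
  ⟨sbFun R, fun n => {B : Set (Fin n → R) // B ∈ 𝔅 n}⟩

/-- The natural interpretation of `sbLang` on `R`: the unary symbol `α` is scalar
multiplication by `α`, the binary symbol is `+`, and each relation symbol is
interpreted by the corresponding set. -/
def sbStructure (R : Type u) [Field R] [LinearOrder R] [IsStrictOrderedRing R] (𝔅 : ∀ n : ℕ, Set (Set (Fin n → R))) :
    (sbLang R 𝔅).Structure R where
  funMap {n} f v :=
    match n, f, v with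
    | 0, e, _ => e.elim
    | 1, α, v => (show R from α) * v 0
    | 2, _, v => v 0 + v 1
    | (_ + 3), e, _ => e.elim
  RelMap {n} B v := v ∈ B.1

open Filter FirstOrder.Language

/-- Let `R` be a real closed field and `𝔅*` a collection of bounded
subsets of the `Rⁿ`'s. Then the order `<` on `R` is not definable with parameters in
the structure `⟨R; +, (λ_α)_{α ∈ R}, 𝔅*⟩`. -/
theorem stmt_9 (R : Type u) [Field R] [LinearOrder R] [IsStrictOrderedRing R] (hR : IsRealClosed' R)
    (𝔅 : ∀ n : ℕ, Set (Set (Fin n → R)))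
    (hbd : ∀ n : ℕ, ∀ B ∈ 𝔅 n, ∃ M : R, ∀ f ∈ B, ∀ i, |f i| ≤ M) :
    letI := sbStructure R 𝔅
    ¬ Set.Definable (Set.univ : Set R) (sbLang R 𝔅) {v : Fin 2 → R | v 0 < v 1} := by
  letI := sbStructure R 𝔅
  intro hdef
  rw [Set.definable_iff_exists_formula_sum] at hdef
  obtain ⟨ψ, hψ⟩ := hdef
  have hψ' : ∀ w : Fin 2 → R, w 0 < w 1 ↔ ψ.Realize (Sum.elim (↑) w) :=
    fun w => Set.ext_iff.1 hψ w
  haveI : Nonempty R := ⟨0⟩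
  let u : Ultrafilter R := Ultrafilter.of atTop
  have hu : (u : Filter R) ≤ atTop := Ultrafilter.of_le _
  letI iG : (sbLang R 𝔅).Structure (Germ (u : Filter R) R) :=
    inferInstanceAs ((sbLang R 𝔅).Structure ((u : Filter R).Product (fun _ => R)))
  -- funMap on the ultrapower, computed
  have hadd : ∀ x y : Germ (u : Filter R) R,
      Structure.funMap (L := sbLang R 𝔅) (n := 2) (PUnit.unit : (sbLang R 𝔅).Functions 2) ![x, y]
        = x + y := by
    intro x y
    refine Filter.Germ.inductionOn₂ x y fun f g => ?_
    have h1 : Structure.funMap (L := sbLang R 𝔅) (n := 2)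
        (PUnit.unit : (sbLang R 𝔅).Functions 2)
        (fun i => ((![f, g] i : R → R) : Germ (u : Filter R) R))
        = ((fun a => ![f, g] 0 a + ![f, g] 1 a : R → R) : Germ (u : Filter R) R) :=
      @Language.Ultraproduct.funMap_cast R (fun _ => R) u (sbLang R 𝔅)
        (fun _ => sbStructure R 𝔅) 2 PUnit.unit ![f, g]
    have h2 : (fun i => ((![f, g] i : R → R) : Germ (u : Filter R) R))
        = ![(f : Germ (u : Filter R) R), (g : Germ (u : Filter R) R)] := by
      funext i; fin_cases i <;> rfl
    rw [h2] at h1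
    rw [h1]
    exact (Filter.Germ.coe_add (l := (u : Filter R)) f g).symm
  have hsmul : ∀ (c : (sbLang R 𝔅).Functions 1) (x : Germ (u : Filter R) R),
      Structure.funMap (L := sbLang R 𝔅) c ![x]
        = (show R from c) • x := by
    intro c x
    refine Filter.Germ.inductionOn x fun f => ?_
    have h1 : Structure.funMap (L := sbLang R 𝔅)
        (c : (sbLang R 𝔅).Functions 1)
        (fun i => ((![f] i : R → R) : Germ (u : Filter R) R))
        = ((fun a => (show R from c) * ![f] 0 a : R → R) : Germ (u : Filter R) R) :=
      @Language.Ultraproduct.funMap_cast R (fun _ => R) u (sbLang R 𝔅)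
        (fun _ => sbStructure R 𝔅) 1 (c : (sbLang R 𝔅).Functions 1) ![f]
    have h2 : (fun i => ((![f] i : R → R) : Germ (u : Filter R) R))
        = ![(f : Germ (u : Filter R) R)] := by
      funext i; fin_cases i <;> rfl
    rw [h2] at h1
    rw [h1]
    exact (Filter.Germ.coe_smul (l := (u : Filter R)) (show R from c) f).symm

  -- every tuple in an interpreted relation is bounded by a constant
  have hrel : ∀ (n : ℕ) (r : (sbLang R 𝔅).Relations n) (x : Fin n → Germ (u : Filter R) R),
      Structure.RelMap (L := sbLang R 𝔅) r x → ∀ k, ∃ M : R,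
        |x k| ≤ (Filter.Germ.const M : Germ (u : Filter R) R) := by
    intro n r x hx k
    set gs : Fin n → R → R := fun k => Quotient.out (x k) with hgs
    have hxg : x = fun k => ((gs k : R → R) : Germ (u : Filter R) R) :=
      funext fun k => (Quotient.out_eq (x k)).symm
    rw [hxg] at hx
    have h2 : ∀ᶠ a in (u : Filter R), (fun k => gs k a) ∈ r.1 :=
      (@Language.relMap_quotient_mk' (sbLang R 𝔅) (R → R)
        ((u : Filter R).productSetoid (fun _ => R))
        (Language.Ultraproduct.setoidPrestructure (fun _ => R) u) n r gs).mp hx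
    obtain ⟨M, hM⟩ := hbd n r.1 r.2
    refine ⟨M, abs_le.2 ⟨?_, ?_⟩⟩
    · have : (Filter.Germ.const (-M) : Germ (u : Filter R) R) ≤ ((gs k : R → R) : _) :=
        Filter.Germ.coe_le.2 (h2.mono fun a ha => neg_le_of_abs_le (hM _ ha k))
      rw [hxg]
      simpa using this
    · rw [hxg]
      exact Filter.Germ.coe_le.2 (h2.mono fun a ha => le_of_abs_le (hM _ ha k))
  -- scalar action versus constant multiplication
  have hsm : ∀ (c : R) (x : Germ (u : Filter R) R),
      c • x = (Filter.Germ.const c) * x := by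
    intro c x
    refine Filter.Germ.inductionOn x fun f => ?_
    rfl
  -- the convex hull of R (the "finite" elements)
  let A : Submodule R (Germ (u : Filter R) R) :=
    { carrier := {x | ∃ M : R, |x| ≤ (Filter.Germ.const M : Germ (u : Filter R) R)}
      add_mem' := by
        rintro x y ⟨Mx, hx⟩ ⟨My, hy⟩
        refine ⟨Mx + My, ?_⟩
        calc |x + y| ≤ |x| + |y| := abs_add_le x y
          _ ≤ Filter.Germ.const Mx + Filter.Germ.const My := add_le_add hx hy
          _ = Filter.Germ.const (Mx + My) := rfl
      zero_mem' := ⟨0, by rw [abs_zero]; exact le_of_eq rfl⟩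
      smul_mem' := by
        rintro c x ⟨M, hx⟩
        refine ⟨|c| * M, ?_⟩
        rw [hsm]
        calc |Filter.Germ.const c * x| = |Filter.Germ.const c| * |x| := abs_mul _ _
          _ ≤ |Filter.Germ.const c| * Filter.Germ.const M := by
              refine mul_le_mul_of_nonneg_left hx (abs_nonneg _)
          _ = Filter.Germ.const (|c| * M) := by rw [← Filter.Germ.const_abs]; rfl
      }
  have hA : ∀ x : Germ (u : Filter R) R,
      x ∈ A ↔ ∃ M : R, |x| ≤ (Filter.Germ.const M : Germ (u : Filter R) R) := fun _ => Iff.rfl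
  -- a complement of A and the order-reversing automorphism
  obtain ⟨V, hV⟩ := Submodule.exists_isCompl A
  set p := A.linearProjOfIsCompl V hV with hp
  set σ : Germ (u : Filter R) R →ₗ[R] Germ (u : Filter R) R :=
    (A.subtype.comp p) + ((A.subtype.comp p) - LinearMap.id) with hσ
  have hσval : ∀ x, σ x = (p x : Germ (u : Filter R) R) + ((p x : Germ (u : Filter R) R) - x) :=
    fun x => rfl
  have hfix : ∀ x ∈ A, σ x = x := by
    intro x hx
    have : p x = ⟨x, hx⟩ := Submodule.linearProjOfIsCompl_apply_left hV ⟨x, hx⟩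
    rw [hσval, this]
    simp
  have hneg : ∀ x ∈ V, σ x = -x := by
    intro x hx
    have : p x = 0 := Submodule.linearProjOfIsCompl_apply_right' hV hx
    rw [hσval, this]
    simp
  have hpσ : ∀ x, p (σ x) = p x := by
    intro x
    have h1 : p ((p x : Germ (u : Filter R) R)) = p x :=
      Submodule.linearProjOfIsCompl_apply_left hV (p x)
    rw [hσval, map_add, map_sub, h1]
    abel
  have hinv : Function.Involutive σ := by
    intro x
    rw [hσval (σ x), hpσ, hσval x]
    abel

  -- the automorphism of the ultrapower induced by `σ`
  let e : Germ (u : Filter R) R ≃[sbLang R 𝔅] Germ (u : Filter R) R :=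
    { toFun := fun y => σ y
      invFun := fun y => σ y
      left_inv := fun x => hinv x
      right_inv := fun x => hinv x
      map_fun' := by
        intro n f x
        match n, f with
        | 0, f => exact PEmpty.elim f
        | 1, c =>
          have hx : x = ![x 0] := by funext i; fin_cases i; rfl
          have hcx : (fun y => σ y) ∘ x = ![σ (x 0)] := by funext i; fin_cases i; rfl
          show σ (Structure.funMap c x) = Structure.funMap c ((fun y => σ y) ∘ x)
          rw [hcx, hsmul c (σ (x 0))]
          conv_lhs => rw [hx]
          rw [hsmul c (x 0)]
          exact map_smul σ (show R from c) (x 0)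
        | 2, f =>
          have hf : f = (PUnit.unit : (sbLang R 𝔅).Functions 2) := rfl
          have hx : x = ![x 0, x 1] := by funext i; fin_cases i <;> rfl
          have hcx : (fun y => σ y) ∘ x = ![σ (x 0), σ (x 1)] := by
            funext i; fin_cases i <;> rfl
          show σ (Structure.funMap f x) = Structure.funMap f ((fun y => σ y) ∘ x)
          rw [hf, hcx, hadd (σ (x 0)) (σ (x 1))]
          conv_lhs => rw [hx]
          rw [hadd (x 0) (x 1)]
          exact map_add σ (x 0) (x 1)
        | (k + 3), f => exact PEmpty.elim f
      map_rel' := by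
        intro n r x
        constructor
        · intro hx
          have hb := hrel n r _ hx
          have hxk : ∀ k, σ (x k) = x k := by
            intro k
            have h1 : σ (x k) ∈ A := hb k
            have h2 : σ (σ (x k)) = σ (x k) := hfix _ h1
            exact (((hinv (x k)).symm.trans h2).symm : σ (x k) = x k)
          have hcx : (fun y => σ y) ∘ x = x := funext hxk
          rwa [hcx] at hx
        · intro hx
          have hb := hrel n r x hx
          have hcx : (fun y => σ y) ∘ x = x := funext fun k => hfix _ (hb k)
          rwa [hcx] }
  -- the "positivity" predicate transferred through Łoś's theorem
  set cp : ↥(Set.univ : Set R) → Germ (u : Filter R) R :=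
    fun a => Filter.Germ.const (a : R) with hcp
  have hPos : ∀ gv : R → R,
      ψ.Realize (M := Germ (u : Filter R) R)
          (Sum.elim cp ![0, ((gv : R → R) : Germ (u : Filter R) R)])
        ↔ ∀ᶠ a in (u : Filter R), 0 < gv a := by
    intro gv
    set X : (↥(Set.univ : Set R) ⊕ Fin 2) → (R → R) :=
      Sum.elim (fun a => fun _ => (a : R)) ![fun _ => (0 : R), gv] with hX
    have h0 := @Language.Ultraproduct.realize_formula_cast R (fun _ => R) u (sbLang R 𝔅)
      (fun _ => sbStructure R 𝔅) (fun _ => ⟨0⟩) (↥(Set.univ : Set R) ⊕ Fin 2) ψ X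
    have hre : (Sum.elim cp ![0, ((gv : R → R) : Germ (u : Filter R) R)])
        = (fun i => ((X i : R → R) : (u : Filter R).Product (fun _ => R))) := by
      funext i
      rcases i with a | j
      · rfl
      · fin_cases j <;> rfl
    refine Iff.trans (iff_of_eq (congrArg _ hre)) (h0.trans ?_)
    refine Filter.eventually_congr (Filter.Eventually.of_forall fun a => ?_)
    have hval2 : (fun i => X i a)
        = Sum.elim (Subtype.val) ![(0 : R), gv a] := by
      funext i
      rcases i with b | j
      · rfl
      · fin_cases j <;> rfl
    rw [hval2]
    have := hψ' ![(0 : R), gv a]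
    simpa using this.symm
  -- the automorphism preserves the predicate
  have hswap : ∀ x : Germ (u : Filter R) R,
      ψ.Realize (Sum.elim cp ![0, σ x]) ↔ ψ.Realize (Sum.elim cp ![0, x]) := by
    intro x
    have h1 := Language.StrongHomClass.realize_formula (L := sbLang R 𝔅) e ψ
      (v := Sum.elim cp ![0, x])
    have h2 : (⇑e) ∘ (Sum.elim cp ![0, x]) = Sum.elim cp ![0, σ x] := by
      funext i
      rcases i with a | j
      · show σ (cp a) = cp a
        exact hfix _ ⟨|(a : R)|, le_of_eq (Filter.Germ.const_abs _).symm⟩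
      · fin_cases j
        · show σ 0 = 0
          exact map_zero σ
        · rfl
    rw [h2] at h1
    exact h1
  -- an infinitely large element
  set xi : Germ (u : Filter R) R := ((id : R → R) : Germ (u : Filter R) R) with hxidef
  have hxi : xi ∉ A := by
    rintro ⟨M, hM⟩
    have h1 : xi ≤ Filter.Germ.const M := le_trans (le_abs_self _) hM
    have h2 : ∀ᶠ a in (u : Filter R), a ≤ M := Filter.Germ.coe_le.1 h1
    have h3 : ∀ᶠ a in (u : Filter R), M < a := hu (eventually_gt_atTop M)
    obtain ⟨a, ha1, ha2⟩ := (h2.and h3).exists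
    exact absurd ha2 (not_lt.2 ha1)
  set v : Germ (u : Filter R) R := xi - (p xi : Germ (u : Filter R) R) with hvdef
  have hvV : v ∈ V := by
    have hker : p v = 0 := by
      rw [hvdef, map_sub, show p ((p xi : Germ (u : Filter R) R)) = p xi from Submodule.linearProjOfIsCompl_apply_left hV (p xi), sub_self]
    exact (Submodule.linearProjOfIsCompl_apply_eq_zero_iff hV).1 hker
  have hvne : v ≠ 0 := by
    intro h0
    refine hxi ?_
    have hxieq : xi = ((p xi : Germ (u : Filter R) R)) := by
      have := sub_eq_zero.1 (hvdef ▸ h0)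
      exact this
    rw [hxieq]
    exact (p xi).2
  obtain ⟨gv, hgv⟩ : ∃ gv : R → R, v = ((gv : R → R) : Germ (u : Filter R) R) :=
    ⟨Quotient.out v, (Quotient.out_eq v).symm⟩
  have hvneg : -v = (((fun a => -(gv a)) : R → R) : Germ (u : Filter R) R) := by
    rw [hgv]
    exact (Filter.Germ.coe_neg gv).symm
  have htri : ∀ᶠ a in (u : Filter R), 0 < gv a ∨ (gv a = 0 ∨ 0 < -(gv a)) :=
    Filter.Eventually.of_forall fun a => by
      rcases lt_trichotomy 0 (gv a) with h | h | h
      · exact Or.inl h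
      · exact Or.inr (Or.inl h.symm)
      · exact Or.inr (Or.inr (by simpa using h))
  rw [Ultrafilter.eventually_or, Ultrafilter.eventually_or] at htri
  have hmid : ¬ ∀ᶠ a in (u : Filter R), gv a = 0 := by
    intro h
    exact hvne (hgv.trans (Filter.Germ.coe_eq.2 h))
  have hiff : ψ.Realize (Sum.elim cp ![0, -v]) ↔ ψ.Realize (Sum.elim cp ![0, v]) := by
    have h1 := hswap v
    rwa [hneg v hvV] at h1
  have hboth : (∀ᶠ a in (u : Filter R), 0 < gv a) ∧ (∀ᶠ a in (u : Filter R), 0 < -(gv a)) := by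
    rcases htri with h | h | h
    · refine ⟨h, ?_⟩
      have h1 : ψ.Realize (Sum.elim cp ![0, v]) := by
        rw [hgv]; exact (hPos gv).2 h
      have h2 := hiff.2 h1
      rw [hvneg] at h2
      exact (hPos (fun a => -(gv a))).1 h2
    · exact absurd h hmid
    · refine ⟨?_, h⟩
      have h2 : ψ.Realize (Sum.elim cp ![0, -v]) := by
        rw [hvneg]; exact (hPos (fun a => -(gv a))).2 h
      have h1 := hiff.1 h2
      rw [hgv] at h1
      exact (hPos gv).1 h1
  obtain ⟨a, ha1, ha2⟩ := (hboth.1.and hboth.2).exists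
  exact absurd (neg_pos.1 ha2) (not_lt.2 ha1.le)
end

section
/- Let R be an ordered abelian group and f : R → R a function such that Δf(x) := f(x+1) − f(x) equals a constant c for all x ≥ a (for some a ∈ R), and f is monotone and 'piecewise-linear-controlled' in the sense of being definable in an o-minimal expansion of the ordered group. Then there is an additive endomorphism λ of R and d ∈ R with f(x) = λ(x) + d for all sufficiently large x. -/
open Set FirstOrder

section Aux

open FirstOrder.Language

universe u

variable {R : Type u} [AddCommGroup R] [LinearOrder R] [IsOrderedAddMonoid R] {L : FirstOrder.Language.{u, u}}
  [L.Structure R]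

lemma stmt18_def_const {n : ℕ} (b : R) (i : Fin n) :
    Set.Definable (univ : Set R) L {v : Fin n → R | v i = b} := by
  refine ⟨Term.equal (Term.var i) ((L.con (⟨b, mem_univ b⟩ : (univ : Set R))).term), ?_⟩
  ext v
  simp [Formula.realize_equal, Term.realize_con]

lemma stmt18_def_le_const
    (horder : Set.Definable (univ : Set R) L {v : Fin 2 → R | v 0 ≤ v 1}) (t0 : R) :
    Set.Definable (univ : Set R) L {v : Fin 1 → R | v 0 ≤ t0} := by
  have h := (horder.inter (stmt18_def_const t0 1)).image_comp (fun _ : Fin 1 => (0 : Fin 2))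
  convert h using 1
  ext v
  constructor
  · intro hv
    refine ⟨![v 0, t0], ⟨?_, ?_⟩, funext fun i => ?_⟩
    · exact hv
    · rfl
    · have : i = 0 := Subsingleton.elim i 0
      subst this; rfl
  · rintro ⟨g, ⟨hg1, hg2⟩, rfl⟩
    have hg1' : g 0 ≤ g 1 := hg1
    have hg2' : g 1 = t0 := hg2
    show g 0 ≤ t0
    rw [← hg2']; exact hg1'

lemma stmt18_def_main {f : R → R}
    (horder : Set.Definable (univ : Set R) L {v : Fin 2 → R | v 0 ≤ v 1})
    (hplus : Set.Definable (univ : Set R) L {v : Fin 3 → R | v 0 + v 1 = v 2})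
    (hf : Set.Definable (univ : Set R) L {v : Fin 2 → R | v 1 = f (v 0)})
    (b t s : R) :
    Set.Definable (univ : Set R) L
      {v : Fin 1 → R | b ≤ v 0 ∧ f (v 0) + s = f (v 0 + t)} := by
  have C1 := horder.preimage_comp (![1, 0] : Fin 2 → Fin 7)
  have C2 := hplus.preimage_comp (![0, 2, 4] : Fin 3 → Fin 7)
  have C3 := hf.preimage_comp (![4, 5] : Fin 2 → Fin 7)
  have C4 := hf.preimage_comp (![0, 6] : Fin 2 → Fin 7)
  have C5 := hplus.preimage_comp (![6, 3, 5] : Fin 3 → Fin 7)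
  have C6 := stmt18_def_const (L := L) b (1 : Fin 7)
  have C7 := stmt18_def_const (L := L) t (2 : Fin 7)
  have C8 := stmt18_def_const (L := L) s (3 : Fin 7)
  have hM := ((((((C1.inter C2).inter C3).inter C4).inter C5).inter C6).inter C7).inter C8
  have h := hM.image_comp (fun _ : Fin 1 => (0 : Fin 7))
  convert h using 1
  ext v
  constructor
  · rintro ⟨hb, heq⟩
    refine ⟨![v 0, b, t, s, v 0 + t, f (v 0 + t), f (v 0)],
      ⟨⟨⟨⟨⟨⟨⟨?_, ?_⟩, ?_⟩, ?_⟩, ?_⟩, ?_⟩, ?_⟩, ?_⟩, funext fun i => ?_⟩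
    · exact hb
    · rfl
    · rfl
    · rfl
    · exact heq
    · rfl
    · rfl
    · rfl
    · have : i = 0 := Subsingleton.elim i 0
      subst this; rfl
  · rintro ⟨g, ⟨⟨⟨⟨⟨⟨⟨h1, h2⟩, h3⟩, h4⟩, h5⟩, h6⟩, h7⟩, h8⟩, rfl⟩
    have h1' : g 1 ≤ g 0 := h1
    have h2' : g 0 + g 2 = g 4 := h2
    have h3' : g 5 = f (g 4) := h3
    have h4' : g 6 = f (g 0) := h4
    have h5' : g 6 + g 3 = g 5 := h5
    have h6' : g 1 = b := h6
    have h7' : g 2 = t := h7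
    have h8' : g 3 = s := h8
    constructor
    · show b ≤ g 0
      rw [← h6']; exact h1'
    · show f (g 0) + s = f (g 0 + t)
      calc f (g 0) + s = g 6 + g 3 := by rw [h4', h8']
        _ = g 5 := h5'
        _ = f (g 4) := h3'
        _ = f (g 0 + t) := by rw [← h2', h7']

end Aux

section Order

universe u

variable {R : Type u} [AddCommGroup R] [LinearOrder R] [IsOrderedAddMonoid R]

lemma stmt18_lub_union :
    ∀ (n : ℕ) (I : Fin n → Set R),
      (∀ i, (I i).Nonempty → ∃ p, IsLUB (I i) p) →
      (⋃ i, I i).Nonempty → ∃ p, IsLUB (⋃ i, I i) p := by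
  intro n
  induction n with
  | zero =>
    intro I _ hne
    rw [iUnion_of_empty] at hne
    exact absurd hne not_nonempty_empty
  | succ n ih =>
    intro I hpiece hne
    have hsplit : (⋃ i, I i) = (⋃ i : Fin n, I i.castSucc) ∪ I (Fin.last n) := by
      ext x
      simp only [mem_iUnion, mem_union]
      exact Fin.exists_fin_succ'
    rcases eq_empty_or_nonempty (⋃ i : Fin n, I i.castSucc) with h0 | h0
    · have heq : (⋃ i, I i) = I (Fin.last n) := by rw [hsplit, h0, empty_union]
      rw [heq] at hne ⊢
      exact hpiece _ hne
    · rcases eq_empty_or_nonempty (I (Fin.last n)) with h1 | h1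
      · have heq : (⋃ i, I i) = ⋃ i : Fin n, I i.castSucc := by rw [hsplit, h1, union_empty]
        rw [heq]
        exact ih _ (fun i hi => hpiece _ hi) h0
      · obtain ⟨p, hp⟩ := ih _ (fun i hi => hpiece _ hi) h0
        obtain ⟨q, hq⟩ := hpiece _ h1
        refine ⟨p ⊔ q, ?_⟩
        rw [hsplit]
        exact hp.union hq

lemma stmt18_exists_isLUB {one : R} (hone : 0 < one)
    {n : ℕ} {I : Fin n → Set R} {A : Set R} (hAI : A = ⋃ i, I i)
    (hforms : ∀ i, (∃ c d : R, I i = Ioo c d) ∨ (∃ c : R, I i = {c}) ∨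
      (∃ c : R, I i = Iio c) ∨ (∃ c : R, I i = Ioi c) ∨ I i = univ)
    {b t0 : R} (hsub : A ⊆ Icc b t0) (hne : A.Nonempty) : ∃ p, IsLUB A p := by
  subst hAI
  have hpiece : ∀ i, (I i).Nonempty → ∃ p, IsLUB (I i) p := by
    intro i hi
    have hIs : I i ⊆ Icc b t0 := (subset_iUnion I i).trans hsub
    rcases hforms i with ⟨c, d, h⟩ | ⟨c, h⟩ | ⟨c, h⟩ | ⟨c, h⟩ | h
    · rw [h] at hi ⊢
      by_cases hd : ∀ z ∈ upperBounds (Ioo c d), d ≤ z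
      · refine ⟨d, ?_, ?_⟩
        · intro x hx
          exact le_of_lt hx.2
        · intro z hz
          exact hd z hz
      · push_neg at hd
        obtain ⟨z, hz, hzd⟩ := hd
        obtain ⟨x, hx⟩ := hi
        have hcz : c < z := lt_of_lt_of_le hx.1 (hz hx)
        exact ⟨z, IsGreatest.isLUB ⟨⟨hcz, hzd⟩, hz⟩⟩
    · rw [h]; exact ⟨c, isLUB_singleton⟩
    · exfalso
      rw [h] at hi hIs
      obtain ⟨x, hx⟩ := hi
      have hbx : b ≤ x := (hIs hx).1
      have hmem : b - one ∈ Iio c :=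
        lt_of_lt_of_le (lt_of_lt_of_le (sub_lt_self b hone) hbx) hx.le
      exact absurd (hIs hmem).1 (not_le.2 (sub_lt_self b hone))
    · exfalso
      rw [h] at hIs
      have hmem : max c t0 + one ∈ Ioi c :=
        lt_of_le_of_lt (le_max_left _ _) (lt_add_of_pos_right _ hone)
      have := (hIs hmem).2
      exact absurd this (not_le.2 (lt_of_le_of_lt (le_max_right _ _) (lt_add_of_pos_right _ hone)))
    · exfalso
      rw [h] at hIs
      have := (hIs (mem_univ (t0 + one))).2
      exact absurd this (not_le.2 (lt_add_of_pos_right _ hone))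
  exact stmt18_lub_union n I hpiece hne

lemma stmt18_L1 (one : R) (hone : 0 < one) (A : Set R) (b : R)
    (hdecA : ∃ (n : ℕ) (I : Fin n → Set R), A = (⋃ i, I i) ∧
      ∀ i, (∃ c d : R, I i = Ioo c d) ∨ (∃ c : R, I i = {c}) ∨
        (∃ c : R, I i = Iio c) ∨ (∃ c : R, I i = Ioi c) ∨ I i = univ)
    (hdecA' : ∀ t0 : R, ∃ (n : ℕ) (I : Fin n → Set R), (A ∩ Iic t0) = (⋃ i, I i) ∧
      ∀ i, (∃ c d : R, I i = Ioo c d) ∨ (∃ c : R, I i = {c}) ∨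
        (∃ c : R, I i = Iio c) ∨ (∃ c : R, I i = Ioi c) ∨ I i = univ)
    (hbA : b ∈ A) (hsub : A ⊆ Ici b)
    (hup : ∀ x ∈ A, x + one ∈ A)
    (hcompl : ∀ x, b ≤ x → x ∉ A → x + one ∉ A) :
    ∀ x, b ≤ x → x ∈ A := by
  intro t0 hbt0
  by_contra ht0
  obtain ⟨m, J, hJ, hJforms⟩ := hdecA' t0
  have hsub' : A ∩ Iic t0 ⊆ Icc b t0 := fun x hx => ⟨hsub hx.1, hx.2⟩
  have hne' : (A ∩ Iic t0).Nonempty := ⟨b, hbA, hbt0⟩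
  obtain ⟨p, hp⟩ := stmt18_exists_isLUB hone hJ hJforms hsub' hne'
  have hnub : p - one ∉ upperBounds (A ∩ Iic t0) := by
    intro h
    have h1 : p ≤ p - one := hp.2 h
    have h2 : p + one ≤ p := le_sub_iff_add_le.mp h1
    exact absurd ((add_le_iff_nonpos_right p).mp h2) (not_le.2 hone)
  obtain ⟨s1, hs1mem, hs1gt⟩ : ∃ s1 ∈ A ∩ Iic t0, p - one < s1 := by
    by_contra hcon
    push_neg at hcon
    exact hnub fun x hx => hcon x hx
  have hs1A : s1 ∈ A := hs1mem.1
  have hst : t0 < s1 + one := by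
    by_contra hle
    push_neg at hle
    have hmem : s1 + one ∈ A ∩ Iic t0 := ⟨hup _ hs1A, hle⟩
    have h1 : s1 + one ≤ p := hp.1 hmem
    have h2 : p < s1 + one := sub_lt_iff_lt_add.mp hs1gt
    exact absurd h1 (not_le.2 h2)
  have hs1t0 : s1 < t0 :=
    lt_of_le_of_ne hs1mem.2 (fun h => ht0 (h ▸ hs1A))
  have hsk : ∀ k : ℕ, s1 + k • one ∈ A := by
    intro k
    induction k with
    | zero => simpa using hs1A
    | succ k ihk =>
      rw [succ_nsmul, ← add_assoc]
      exact hup _ ihk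
  have htk : ∀ k : ℕ, t0 + k • one ∉ A := by
    intro k
    induction k with
    | zero => simpa using ht0
    | succ k ihk =>
      have hb' : b ≤ t0 + k • one :=
        le_trans hbt0 (le_add_of_nonneg_right (nsmul_nonneg hone.le k))
      have := hcompl _ hb' ihk
      rw [succ_nsmul, ← add_assoc]
      exact this
  obtain ⟨n, I, hAI, hforms⟩ := hdecA
  have hmem : ∀ k : ℕ, ∃ i, s1 + k • one ∈ I i := by
    intro k
    exact mem_iUnion.mp (hAI ▸ hsk k)
  choose g hg using hmem
  obtain ⟨i, j, hij, hgij⟩ := Finite.exists_ne_map_eq_of_infinite g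
  have key : ∀ i' j' : ℕ, i' < j' → g i' = g j' → False := by
    intro i' j' hlt heq
    have hOC : OrdConnected (I (g i')) := by
      rcases hforms (g i') with ⟨c, d, h⟩ | ⟨c, h⟩ | ⟨c, h⟩ | ⟨c, h⟩ | h <;> rw [h]
      · exact ordConnected_Ioo
      · exact ordConnected_singleton
      · exact ordConnected_Iio
      · exact ordConnected_Ioi
      · exact ordConnected_univ
    have h1 : s1 + i' • one ∈ I (g i') := hg i'
    have h2 : s1 + j' • one ∈ I (g i') := by rw [heq]; exact hg j'
    have hz : t0 + i' • one ∈ Icc (s1 + i' • one) (s1 + j' • one) := by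
      constructor
      · exact add_le_add_left hs1t0.le _
      · have hc : t0 + i' • one < s1 + (i' + 1) • one := by
          calc t0 + i' • one < (s1 + one) + i' • one := add_lt_add_left hst _
            _ = s1 + (i' + 1) • one := by rw [succ_nsmul]; abel
        exact le_of_lt (lt_of_lt_of_le hc
          (add_le_add_right (nsmul_le_nsmul_left hone.le (Nat.succ_le_of_lt hlt)) _))
    have hmem2 : t0 + i' • one ∈ I (g i') := hOC.out h1 h2 hz
    have : t0 + i' • one ∈ A := by
      rw [hAI]
      exact mem_iUnion.mpr ⟨g i', hmem2⟩
    exact htk i' this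
  rcases hij.lt_or_gt with h | h
  · exact key i j h hgij
  · exact key j i h hgij.symm

end Order

/-- Let `R` be an ordered abelian group, `one > 0` a fixed positive
element, and `f : R → R` a monotone function definable in an o-minimal expansion of the
ordered group `⟨R; <, +⟩`, such that `Δf(x) = f(x + one) - f(x) = c` for all `x ≥ a`.
Then `f` is eventually affine: there are an additive endomorphism `λ` of `R` (with
`λ(one) = c`) and `d : R` with `f(x) = λ(x) + d` for all sufficiently large `x`. -/
theorem stmt_18 {R : Type u} [AddCommGroup R] [LinearOrder R] [IsOrderedAddMonoid R]
    (L : FirstOrder.Language.{u, u}) [L.Structure R]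
    -- `L` expands the ordered group structure:
    (horder : Set.Definable (univ : Set R) L {v : Fin 2 → R | v 0 ≤ v 1})
    (hplus : Set.Definable (univ : Set R) L {v : Fin 3 → R | v 0 + v 1 = v 2})
    -- o-minimality: every definable subset of `R` is a finite union of points
    -- and open intervals (bounded or unbounded):
    (homin : ∀ S : Set (Fin 1 → R), Set.Definable (univ : Set R) L S →
      ∃ (n : ℕ) (I : Fin n → Set R),
        {x : R | (fun _ => x) ∈ S} = ⋃ i, I i ∧
        ∀ i, (∃ c d : R, I i = Ioo c d) ∨ (∃ c : R, I i = {c}) ∨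
          (∃ c : R, I i = Iio c) ∨ (∃ c : R, I i = Ioi c) ∨ I i = univ)
    (one : R) (hone : 0 < one)
    (f : R → R)
    (hf : Set.Definable (univ : Set R) L {v : Fin 2 → R | v 1 = f (v 0)})
    (hmono : Monotone f ∨ Antitone f)
    (c a : R) (hΔ : ∀ x : R, a ≤ x → f (x + one) - f x = c) :
    ∃ (lam : R →+ R) (d a' : R), lam one = c ∧ ∀ x : R, a' < x → f x = lam x + d := by
  have KEY : ∀ t : R, ∃ s : R, ∀ x : R, max a (a - t) ≤ x → f (x + t) - f x = s := by
    intro t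
    set b0 : R := max a (a - t) with hb0
    set s : R := f (b0 + t) - f b0 with hs
    set A : Set R := {x : R | b0 ≤ x ∧ f x + s = f (x + t)} with hA
    have hb0A : b0 ∈ A := by
      refine ⟨le_refl _, ?_⟩
      rw [hs]; abel
    have hsubA : A ⊆ Ici b0 := fun x hx => hx.1
    have hupA : ∀ x ∈ A, x + one ∈ A := by
      rintro x ⟨hbx, heq⟩
      have hxa : a ≤ x := le_trans (le_max_left _ _) hbx
      have hxta : a ≤ x + t := sub_le_iff_le_add.mp (le_trans (le_max_right _ _) hbx)
      have e1 : f (x + one) = f x + c := by rw [← hΔ x hxa]; abel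
      have e2 : f (x + t + one) = f (x + t) + c := by rw [← hΔ _ hxta]; abel
      refine ⟨le_trans hbx (le_add_of_nonneg_right hone.le), ?_⟩
      rw [add_right_comm x one t, e2, e1, ← heq]
      abel
    have hcomplA : ∀ x, b0 ≤ x → x ∉ A → x + one ∉ A := by
      intro x hbx hxA hcontra
      obtain ⟨_, heq⟩ := hcontra
      have hxa : a ≤ x := le_trans (le_max_left _ _) hbx
      have hxta : a ≤ x + t := sub_le_iff_le_add.mp (le_trans (le_max_right _ _) hbx)
      have e1 : f (x + one) = f x + c := by rw [← hΔ x hxa]; abel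
      have e2 : f (x + t + one) = f (x + t) + c := by rw [← hΔ _ hxta]; abel
      rw [add_right_comm x one t, e2, e1, add_right_comm (f x) c s] at heq
      exact hxA ⟨hbx, add_right_cancel heq⟩
    have hd := stmt18_def_main horder hplus hf b0 t s
    have hdecA : ∃ (n : ℕ) (I : Fin n → Set R), A = (⋃ i, I i) ∧
        ∀ i, (∃ c d : R, I i = Ioo c d) ∨ (∃ c : R, I i = {c}) ∨
          (∃ c : R, I i = Iio c) ∨ (∃ c : R, I i = Ioi c) ∨ I i = univ := by
      obtain ⟨n, I, hU, hforms⟩ := homin _ hd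
      exact ⟨n, I, hU, hforms⟩
    have hdecA' : ∀ t0 : R, ∃ (n : ℕ) (I : Fin n → Set R), (A ∩ Iic t0) = (⋃ i, I i) ∧
        ∀ i, (∃ c d : R, I i = Ioo c d) ∨ (∃ c : R, I i = {c}) ∨
          (∃ c : R, I i = Iio c) ∨ (∃ c : R, I i = Ioi c) ∨ I i = univ := by
      intro t0
      obtain ⟨n, I, hU, hforms⟩ := homin _ (hd.inter (stmt18_def_le_const horder t0))
      exact ⟨n, I, hU, hforms⟩
    have hAll := stmt18_L1 one hone A b0 hdecA hdecA' hb0A hsubA hupA hcomplA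
    refine ⟨s, fun x hx => ?_⟩
    have hmem := hAll x hx
    rw [← hmem.2, add_sub_cancel_left]
  choose lam0 hKEY using KEY
  have hadd : ∀ t u : R, lam0 (t + u) = lam0 t + lam0 u := by
    intro t u
    set x : R := max (max a (a - (t + u))) (max (a - u) (a - t - u)) with hx
    have h1 : max a (a - (t + u)) ≤ x := le_max_left _ _
    have h2 : a - u ≤ x := le_trans (le_max_left _ _) (le_max_right _ _)
    have h3 : a - t - u ≤ x := le_trans (le_max_right _ _) (le_max_right _ _)
    have h4 : a ≤ x := le_trans (le_max_left _ _) h1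
    have hu : max a (a - u) ≤ x := max_le h4 h2
    have ht : max a (a - t) ≤ x + u :=
      max_le (sub_le_iff_le_add.mp h2) (sub_le_iff_le_add.mp h3)
    have e1 := hKEY (t + u) x h1
    have e2 := hKEY u x hu
    have e3 := hKEY t (x + u) ht
    have hxx : x + u + t = x + (t + u) := by abel
    rw [hxx] at e3
    rw [← e1, ← e2, ← e3]
    abel
  refine ⟨AddMonoidHom.mk' lam0 hadd, f a - lam0 a, a, ?_, ?_⟩
  · show lam0 one = c
    exact (hKEY one (max a (a - one)) (le_refl _)).symm.trans
      (hΔ _ (le_max_left a (a - one)))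
  · intro x hx
    have hxa : a ≤ x := hx.le
    have hmax : max a (a - (x - a)) ≤ a :=
      max_le (le_refl a) (sub_le_self _ (sub_nonneg.mpr hxa))
    have h := hKEY (x - a) a hmax
    have hax : a + (x - a) = x := by abel
    rw [hax] at h
    have hsplit : lam0 x = lam0 (x - a) + lam0 a := by
      rw [← hadd, sub_add_cancel]
    show f x = lam0 x + (f a - lam0 a)
    rw [hsplit, ← h]
    abel
end
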